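/- arXiv:2506.21695 — 5 statements merged into one kernel-verified Lean document; each statement's English description precedes it below -/
import Mathlib

section
/- For N i.i.d. uniform samples on [0,1] with order statistics u_1 ≤ ... ≤ u_N and spacings s_i = u_i - u_{i-1}, for any ε > 0 and any index 1 < i ≤ N-1, the probability that s_i < ε and s_{i+1} > ε equals (1-ε)_+^N - (1-2ε)_+^N, where y_+ = max(y, 0). -/
/-!
On the cell of samples whose sorting permutation is `σ`, lowering the `j`-th order statistic by
`ε` times the number of indices of `S` that lie at or below `j` shrinks every spacing indexed by
`S` by exactly `ε` and keeps the sample sorted. Up to null sets this translation maps the event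
"all spacings indexed by `S` exceed `ε`" within `[0,1]^N` onto the same cell of the cube
`[0, 1 - |S|ε]^N`; summing over `σ` gives the probability `(1 - |S|ε)₊^N`. The theorem is the
case `S = {i+1}` minus the case `S = {i, i+1}`, the tie `s_i = ε` having probability zero.
-/

open MeasureTheory Set

/-- The law of `N` i.i.d. Uniform[0,1] samples. -/
noncomputable def unifN (N : ℕ) : Measure (Fin N → ℝ) :=
  Measure.pi fun _ => volume.restrict (Set.Icc (0 : ℝ) 1)

/-- The `i`-th order statistic (0-indexed). -/
noncomputable def orderStat {N : ℕ} (x : Fin N → ℝ) (i : Fin N) : ℝ :=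
  x (Tuple.sort x i)

/-- Spacings `s_i = u_i - u_{i-1}` (0-indexed, with the convention `u_0 = 0`). -/
noncomputable def spacing {N : ℕ} (x : Fin N → ℝ) (i : Fin N) : ℝ :=
  if i.val = 0 then orderStat x i
  else orderStat x i - orderStat x ⟨i.val - 1, Nat.lt_of_le_of_lt (Nat.sub_le _ _) i.isLt⟩

open Filter
open scoped Pointwise

theorem measure_eq_of_subset_of_subset {α : Type*} [MeasurableSpace α] {μ : Measure α}
    {s t u : Set α} (hst : s ⊆ t) (htu : t ⊆ u) (hus : μ u ≤ μ s) : μ t = μ s :=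
  le_antisymm ((measure_mono htu).trans hus) (measure_mono hst)

theorem measure_lt_and_lt_eq_sub {α : Type*} [MeasurableSpace α] {μ : Measure α}
    [IsFiniteMeasure μ] {f g : α → ℝ} (hf : Measurable f) (hg : Measurable g) {ε : ℝ}
    (hfε : ∀ᵐ x ∂μ, f x ≠ ε) :
    μ {x | f x < ε ∧ ε < g x} = μ {x | ε < g x} - μ {x | ε < f x ∧ ε < g x} := by
  have hdiff : {x | f x < ε ∧ ε < g x} = {x | ε < g x} \ {x | ε ≤ f x ∧ ε < g x} := by
    ext x
    simp only [mem_ofPred_eq, Set.mem_sdiff]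
    exact ⟨fun h => ⟨h.2, fun h' => absurd h'.1 (not_le.2 h.1)⟩,
      fun h => ⟨not_le.1 fun h' => h.2 ⟨h', h.1⟩, h.1⟩⟩
  have hsub : {x | ε ≤ f x ∧ ε < g x} ⊆ {x | ε < g x} := fun _ hx => hx.2
  have hmeas : MeasurableSet {x | ε ≤ f x ∧ ε < g x} :=
    (measurableSet_le measurable_const hf).inter (measurableSet_lt measurable_const hg)
  have hae : {x | ε ≤ f x ∧ ε < g x} =ᵐ[μ] {x | ε < f x ∧ ε < g x} := by
    filter_upwards [hfε] with x hx
    change (ε ≤ f x ∧ ε < g x) = (ε < f x ∧ ε < g x)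
    rw [hx.symm.le_iff_lt]
  rw [hdiff, measure_sdiff hsub hmeas.nullMeasurableSet (measure_ne_top μ _), measure_congr hae]

theorem ae_linearMap_ne {E : Type*} [NormedAddCommGroup E] [NormedSpace ℝ E] [MeasurableSpace E]
    [BorelSpace E] [FiniteDimensional ℝ E] (μ : Measure E) [μ.IsAddHaarMeasure]
    {L : E →ₗ[ℝ] ℝ} (hL : L ≠ 0) (c : ℝ) : ∀ᵐ x ∂μ, L x ≠ c :=
  (ae_comp_linearMap_mem_iff L μ volume (LinearMap.surjective_of_ne_zero hL)
    (measurableSet_singleton c).compl).2 (Measure.ae_ne volume c)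

theorem ae_forall_sub_ne {ι : Type*} [Fintype ι] (c : ℝ) :
    ∀ᵐ x : ι → ℝ, ∀ k l, k ≠ l → x k - x l ≠ c := by
  classical
  refine ae_all_iff.2 fun k => ae_all_iff.2 fun l => ?_
  by_cases hkl : k = l
  · exact Eventually.of_forall fun _ h => absurd hkl h
  have hL : LinearMap.proj (R := ℝ) (φ := fun _ : ι => ℝ) k - LinearMap.proj l ≠ 0 := by
    intro h
    have := LinearMap.congr_fun h (Pi.single k 1)
    simp [Pi.single_eq_of_ne (Ne.symm hkl)] at this
  filter_upwards [ae_linearMap_ne volume hL c] with x hx _ using hx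

theorem ae_injective {ι : Type*} [Fintype ι] : ∀ᵐ x : ι → ℝ, Function.Injective x := by
  filter_upwards [ae_forall_sub_ne (ι := ι) 0] with x hx k l hkl
  by_contra h
  exact hx k l h (sub_eq_zero.2 hkl)

def cube (n : ℕ) (c : ℝ) : Set (Fin n → ℝ) := univ.pi fun _ => Icc 0 c

def openCube (n : ℕ) (c : ℝ) : Set (Fin n → ℝ) := univ.pi fun _ => Ioo 0 c

theorem measurableSet_cube (n : ℕ) (c : ℝ) : MeasurableSet (cube n c) :=
  .univ_pi fun _ => measurableSet_Icc

theorem openCube_subset_cube (n : ℕ) (c : ℝ) : openCube n c ⊆ cube n c :=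
  pi_mono fun _ _ => Ioo_subset_Icc_self

theorem openCube_ae_eq_cube (n : ℕ) (c : ℝ) : openCube n c =ᵐ[volume] cube n c :=
  Measure.pi_Ioo_ae_eq_pi_Icc

theorem volume_cube (n : ℕ) (c : ℝ) : volume (cube n c) = ENNReal.ofReal (max c 0 ^ n) := by
  rw [cube, volume_pi_pi]
  simp [Real.volume_Icc, ENNReal.ofReal_pow (le_max_right c 0)]

theorem unifN_eq_restrict_cube (N : ℕ) : unifN N = volume.restrict (cube N 1) := by
  rw [unifN, cube, volume_pi, Measure.restrict_pi_pi]

instance (N : ℕ) : IsProbabilityMeasure (unifN N) :=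
  ⟨by rw [unifN_eq_restrict_cube, Measure.restrict_apply_univ, volume_cube]; simp⟩

section SortCells

variable {n : ℕ}

def sortCell (σ : Equiv.Perm (Fin n)) : Set (Fin n → ℝ) := {x | Tuple.sort x = σ}

def monoCell (σ : Equiv.Perm (Fin n)) : Set (Fin n → ℝ) := {x | Monotone (x ∘ σ)}

def strictMonoCell (σ : Equiv.Perm (Fin n)) : Set (Fin n → ℝ) := {x | StrictMono (x ∘ σ)}

theorem measurableSet_sortCell (σ : Equiv.Perm (Fin n)) : MeasurableSet (sortCell σ) := by
  have : sortCell σ = (⋂ (i) (j) (_ : i ≤ j), {x : Fin n → ℝ | x (σ i) ≤ x (σ j)}) ∩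
      ⋂ (i) (j) (_ : i < j), {x | x (σ i) = x (σ j) → σ i < σ j} := by
    ext x
    simp [sortCell, eq_comm (a := Tuple.sort x), Tuple.eq_sort_iff, Monotone]
  rw [this]
  measurability

theorem measure_eq_sum_inter_sortCell {μ : Measure (Fin n → ℝ)} {T : Set (Fin n → ℝ)}
    (hT : MeasurableSet T) : μ T = ∑ σ, μ (T ∩ sortCell σ) := by
  have hcover : ⋃ σ : Equiv.Perm (Fin n), sortCell σ = univ :=
    eq_univ_of_forall fun x => mem_iUnion.2 ⟨_, rfl⟩
  calc μ T = μ (⋃ σ, T ∩ sortCell σ) := by rw [← inter_iUnion, hcover, inter_univ]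
    _ = ∑ σ, μ (T ∩ sortCell σ) := by
      refine (measure_iUnion ?_ fun σ => hT.inter (measurableSet_sortCell σ)).trans
        (tsum_fintype _)
      exact fun σ τ h => disjoint_left.2 fun _ hσ hτ => h (hσ.2.symm.trans hτ.2)

theorem strictMonoCell_subset_sortCell (σ : Equiv.Perm (Fin n)) :
    strictMonoCell σ ⊆ sortCell σ := fun _ hx =>
  (Tuple.eq_sort_iff.2 ⟨hx.monotone, fun _ _ hij he => absurd he (hx hij).ne⟩).symm

theorem sortCell_subset_monoCell (σ : Equiv.Perm (Fin n)) : sortCell σ ⊆ monoCell σ :=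
  fun x hx => show Monotone (x ∘ σ) from hx ▸ Tuple.monotone_sort x

theorem strictMonoCell_ae_eq_monoCell (σ : Equiv.Perm (Fin n)) :
    strictMonoCell σ =ᵐ[volume] monoCell σ := by
  refine ((strictMonoCell_subset_sortCell σ).trans
    (sortCell_subset_monoCell σ)).eventuallyLE.antisymm ?_
  filter_upwards [ae_injective] with x hx hmono
  exact hmono.strictMono_of_injective (hx.comp σ.injective)

theorem orderStat_of_mem_sortCell {σ : Equiv.Perm (Fin n)} {x : Fin n → ℝ}
    (hx : x ∈ sortCell σ) (j : Fin n) : orderStat x j = x (σ j) := by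
  rw [orderStat, show Tuple.sort x = σ from hx]

theorem measurable_orderStat (j : Fin n) : Measurable fun x : Fin n → ℝ => orderStat x j := by
  intro B hB
  have : (fun x => orderStat x j) ⁻¹' B = ⋃ σ, sortCell σ ∩ {x | x (σ j) ∈ B} := by
    ext x
    simp [orderStat, sortCell]
  rw [this]
  exact .iUnion fun σ => (measurableSet_sortCell σ).inter (measurable_pi_apply _ hB)

end SortCells

section Spacings

variable {n : ℕ}

theorem spacing_succ (x : Fin (n + 1) → ℝ) (j : Fin n) :
    spacing x j.succ = orderStat x j.succ - orderStat x j.castSucc := by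
  rw [spacing, if_neg (Fin.val_succ j ▸ Nat.succ_ne_zero _)]
  rfl

theorem spacing_succ_of_mem_sortCell {σ : Equiv.Perm (Fin (n + 1))} {x : Fin (n + 1) → ℝ}
    (hx : x ∈ sortCell σ) (j : Fin n) :
    spacing x j.succ = x (σ j.succ) - x (σ j.castSucc) := by
  rw [spacing_succ, orderStat_of_mem_sortCell hx, orderStat_of_mem_sortCell hx]

theorem measurable_spacing_succ (j : Fin n) :
    Measurable fun x : Fin (n + 1) → ℝ => spacing x j.succ := by
  simp_rw [spacing_succ]
  exact (measurable_orderStat _).sub (measurable_orderStat _)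

theorem ae_unifN_spacing_succ_ne (j : Fin n) (c : ℝ) :
    ∀ᵐ x ∂unifN (n + 1), spacing x j.succ ≠ c := by
  rw [unifN_eq_restrict_cube]
  refine ae_restrict_of_ae ?_
  filter_upwards [ae_forall_sub_ne c] with x hx
  rw [spacing_succ]
  exact hx _ _ ((Tuple.sort x).injective.ne (Fin.castSucc_lt_succ (i := j)).ne')

end Spacings

section GapShift

variable {n : ℕ} (ε : ℝ) (S : Finset (Fin n))

def gapShift (k : Fin (n + 1)) : ℝ := ε * (S.filter fun j => j.castSucc < k).card

theorem gapShift_zero : gapShift ε S 0 = 0 := by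
  simp [gapShift]

theorem gapShift_last : gapShift ε S (Fin.last n) = ε * S.card := by
  simp [gapShift, Fin.castSucc_lt_last]

theorem gapShift_succ (m : Fin n) :
    gapShift ε S m.succ = gapShift ε S m.castSucc + if m ∈ S then ε else 0 := by
  simp only [gapShift, Fin.castSucc_lt_succ_iff, Fin.castSucc_lt_castSucc_iff, Finset.card_filter]
  have hcount : ∑ i ∈ S, (if i ≤ m then 1 else 0 : ℕ) =
      ∑ i ∈ S, (if i < m then 1 else 0 : ℕ) + if m ∈ S then 1 else 0 := by
    rw [← Finset.sum_ite_eq' S m fun _ => 1, ← Finset.sum_add_distrib]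
    refine Finset.sum_congr rfl fun i _ => ?_
    rcases lt_trichotomy i m with h | rfl | h
    · simp [h, h.le, h.ne]
    · simp
    · simp [not_le_of_gt h, not_lt_of_gt h, h.ne']
  rw [hcount]
  split_ifs <;> push_cast <;> ring

theorem monotone_gapShift (hε : 0 ≤ ε) : Monotone (gapShift ε S) := fun k l hkl =>
  mul_le_mul_of_nonneg_left (Nat.cast_le.2 (Finset.card_le_card fun j hj => by
    simp only [Finset.mem_filter] at hj ⊢
    exact ⟨hj.1, hj.2.trans_le hkl⟩)) hε

end GapShift

section GapEvent

variable {n : ℕ} (ε : ℝ) (S : Finset (Fin n))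

def gapEvent : Set (Fin (n + 1) → ℝ) := {x | ∀ j ∈ S, ε < spacing x j.succ}

theorem measurableSet_gapEvent : MeasurableSet (gapEvent ε S) := by
  simp only [gapEvent, ofPred_forall]
  exact .iInter fun j => .iInter fun _ =>
    measurableSet_lt measurable_const (measurable_spacing_succ j)

theorem gapEvent_inter_cube_inter_sortCell_subset_vadd (σ : Equiv.Perm (Fin (n + 1))) :
    gapEvent ε S ∩ cube (n + 1) 1 ∩ sortCell σ ⊆
      (gapShift ε S ∘ σ.symm) +ᵥ (cube (n + 1) (1 - S.card * ε) ∩ monoCell σ) := by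
  rintro x ⟨⟨hgap, hcube⟩, hσ⟩
  set y := -(gapShift ε S ∘ σ.symm) +ᵥ x
  have hy : ∀ j, y (σ j) = x (σ j) - gapShift ε S j := fun j => by
    simp only [y, vadd_eq_add, Pi.add_apply, Pi.neg_apply, Function.comp_apply,
      Equiv.symm_apply_apply]
    ring
  have hmono : Monotone (y ∘ σ) := Fin.monotone_iff_le_succ.2 fun m => by
    simp only [Function.comp_apply, hy, gapShift_succ]
    split_ifs with hm
    · have := hgap m hm
      rw [spacing_succ_of_mem_sortCell hσ] at this
      linarith
    · have := sortCell_subset_monoCell σ hσ (Fin.castSucc_lt_succ (i := m)).le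
      simp only [Function.comp_apply] at this
      linarith
  refine mem_vadd_set_iff_neg_vadd_mem.2 ⟨fun k _ => ?_, hmono⟩
  obtain ⟨j, rfl⟩ := σ.surjective k
  have h0 := hmono (Fin.zero_le j)
  have hl := hmono (Fin.le_last j)
  simp only [Function.comp_apply, hy, gapShift_zero, gapShift_last] at h0 hl
  have hx0 := (hcube (σ 0) (mem_univ _)).1
  have hxl := (hcube (σ (Fin.last n)) (mem_univ _)).2
  change y (σ j) ∈ Icc 0 _
  rw [hy]
  exact ⟨by linarith, by linarith⟩

theorem vadd_openCube_inter_strictMonoCell_subset (hε : 0 ≤ ε) (σ : Equiv.Perm (Fin (n + 1))) :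
    (gapShift ε S ∘ σ.symm) +ᵥ (openCube (n + 1) (1 - S.card * ε) ∩ strictMonoCell σ) ⊆
      gapEvent ε S ∩ cube (n + 1) 1 ∩ sortCell σ := by
  rintro _ ⟨y, ⟨hbox, hy⟩, rfl⟩
  set x := (gapShift ε S ∘ σ.symm) +ᵥ y
  have hx : ∀ j, x (σ j) = y (σ j) + gapShift ε S j := fun j => by
    simp only [x, vadd_eq_add, Pi.add_apply, Function.comp_apply, Equiv.symm_apply_apply]
    ring
  have hstrict : StrictMono (x ∘ σ) := by
    rw [show x ∘ σ = y ∘ σ + gapShift ε S from funext hx]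
    exact hy.add_monotone (monotone_gapShift ε S hε)
  have hσ := strictMonoCell_subset_sortCell σ hstrict
  refine ⟨⟨fun m hm => ?_, fun k _ => ?_⟩, hσ⟩
  · have := hy (Fin.castSucc_lt_succ (i := m))
    simp only [Function.comp_apply] at this
    rw [spacing_succ_of_mem_sortCell hσ, hx, hx, gapShift_succ, if_pos hm]
    linarith
  · obtain ⟨j, rfl⟩ := σ.surjective k
    have hj := hbox (σ j) (mem_univ _)
    have h0 := monotone_gapShift ε S hε (Fin.zero_le j)
    have hl := monotone_gapShift ε S hε (Fin.le_last j)
    rw [gapShift_zero] at h0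
    rw [gapShift_last] at hl
    change x (σ j) ∈ Icc 0 1
    rw [hx]
    exact ⟨by linarith [hj.1], by linarith [hj.2]⟩

theorem volume_gapEvent_inter_cube_inter_sortCell (hε : 0 ≤ ε) (σ : Equiv.Perm (Fin (n + 1))) :
    volume (gapEvent ε S ∩ cube (n + 1) 1 ∩ sortCell σ) =
      volume (cube (n + 1) (1 - S.card * ε) ∩ sortCell σ) := by
  set c := 1 - S.card * ε
  set w := gapShift ε S ∘ σ.symm
  have hPQ : volume (openCube (n + 1) c ∩ strictMonoCell σ) =
      volume (cube (n + 1) c ∩ monoCell σ) :=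
    measure_congr ((openCube_ae_eq_cube _ _).inter (strictMonoCell_ae_eq_monoCell σ))
  calc volume (gapEvent ε S ∩ cube (n + 1) 1 ∩ sortCell σ)
      = volume (w +ᵥ (openCube (n + 1) c ∩ strictMonoCell σ)) :=
        measure_eq_of_subset_of_subset (vadd_openCube_inter_strictMonoCell_subset ε S hε σ)
          (gapEvent_inter_cube_inter_sortCell_subset_vadd ε S σ)
          (by rw [measure_vadd, measure_vadd, hPQ])
    _ = volume (openCube (n + 1) c ∩ strictMonoCell σ) := measure_vadd ..
    _ = volume (cube (n + 1) c ∩ sortCell σ) :=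
        (measure_eq_of_subset_of_subset
          (inter_subset_inter (openCube_subset_cube _ _) (strictMonoCell_subset_sortCell σ))
          (inter_subset_inter_right _ (sortCell_subset_monoCell σ)) hPQ.ge).symm

theorem unifN_gapEvent (hε : 0 ≤ ε) :
    unifN (n + 1) (gapEvent ε S) = ENNReal.ofReal (max (1 - S.card * ε) 0 ^ (n + 1)) := by
  rw [unifN_eq_restrict_cube, Measure.restrict_apply (measurableSet_gapEvent ε S),
    measure_eq_sum_inter_sortCell ((measurableSet_gapEvent ε S).inter (measurableSet_cube _ _))]
  simp_rw [volume_gapEvent_inter_cube_inter_sortCell ε S hε]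
  rw [← measure_eq_sum_inter_sortCell (measurableSet_cube _ _), volume_cube]

end GapEvent

/-- For `N` i.i.d. Uniform[0,1] samples and any index `1 < i ≤ N-1` (1-indexed; here the
0-indexed `i` satisfies `1 ≤ i ≤ N-2`), the probability that `s_i < ε` and `s_{i+1} > ε`
equals `(1-ε)₊^N - (1-2ε)₊^N`. -/
theorem spacing_pair_prob (N : ℕ) (ε : ℝ) (hε : 0 < ε) (i : Fin N)
    (h1 : 1 ≤ i.val) (h2 : i.val ≤ N - 2) :
    unifN N {x : Fin N → ℝ |
        spacing x i < ε ∧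
        ε < spacing x ⟨i.val + 1, by have := i.isLt; omega⟩} =
      ENNReal.ofReal ((max (1 - ε) 0) ^ N - (max (1 - 2 * ε) 0) ^ N) := by
  obtain ⟨n, rfl⟩ : ∃ n, N = n + 1 := ⟨N - 1, by omega⟩
  obtain ⟨j, rfl⟩ : ∃ j : Fin n, j.succ = i :=
    ⟨⟨i - 1, by omega⟩, Fin.ext (by rw [Fin.val_succ]; dsimp only; omega)⟩
  set j' : Fin n := ⟨j + 1, by have := Fin.val_succ j; omega⟩
  have hjj' : j ≠ j' := fun h => by simp [j', Fin.ext_iff] at h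
  change unifN (n + 1) {x | spacing x j.succ < ε ∧ ε < spacing x j'.succ} = _
  rw [measure_lt_and_lt_eq_sub (measurable_spacing_succ j) (measurable_spacing_succ j')
    (ae_unifN_spacing_succ_ne j ε)]
  have hnext : {x | ε < spacing x j'.succ} = gapEvent ε {j'} := by simp [gapEvent]
  have hboth : {x | ε < spacing x j.succ ∧ ε < spacing x j'.succ} = gapEvent ε {j, j'} := by
    simp [gapEvent]
  rw [hnext, hboth, unifN_gapEvent _ _ hε.le, unifN_gapEvent _ _ hε.le, Finset.card_singleton,
    Finset.card_pair hjj', ← ENNReal.ofReal_sub _ (by positivity)]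
  norm_num
end

section
/- Let a_N = ((2N-2)/(N-2))^{1/(N-1)} and ε_N = (a_N - 1)/(2a_N - 1) for integers N ≥ 3. Then N·ε_N converges to ln(2) as N → ∞. -/
open Filter

/-- `a_N = ((2N-2)/(N-2))^(1/(N-1))`. -/
noncomputable def aN (N : ℕ) : ℝ :=
  ((2 * (N : ℝ) - 2) / ((N : ℝ) - 2)) ^ ((1 : ℝ) / ((N : ℝ) - 1))

/-- `ε_N = (a_N - 1)/(2a_N - 1)`, the maximizer of the expected cluster count. -/
noncomputable def epsN (N : ℕ) : ℝ := (aN N - 1) / (2 * aN N - 1)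

/-!
Writing `c_N = log a_N = log((2N-2)/(N-2)) / (N-1)`, we have `N c_N → log 2` and
`ε_N = g(c_N)` with `g x = (eˣ - 1)/(2eˣ - 1)`. Since `g 0 = 0` and `g'(0) = 1`, the factor
`g(c_N)/c_N` tends to `1`, so `N ε_N` has the same limit as `N c_N`.
-/

open Real Topology

theorem Filter.Tendsto.smul_comp_of_hasDerivAt {α E : Type*} [NormedAddCommGroup E]
    [NormedSpace ℝ E] {l : Filter α} {t c : α → ℝ} {g : ℝ → E} {g' : E} {L : ℝ}
    (hg : HasDerivAt g g' 0) (hg0 : g 0 = 0) (ht : Tendsto t l atTop)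
    (htc : Tendsto (fun n => t n * c n) l (𝓝 L)) :
    Tendsto (fun n => t n • g (c n)) l (𝓝 (L • g')) := by
  have hc : Tendsto c l (𝓝 0) := by
    refine (htc.div_atTop ht).congr' ?_
    filter_upwards [ht.eventually_gt_atTop 0] with n hn
    field_simp
  have hslope : Tendsto (fun n => dslope g 0 (c n)) l (𝓝 g') := by
    rw [← hg.deriv, ← dslope_same]
    exact (continuousAt_dslope_same.mpr hg.differentiableAt).tendsto.comp hc
  refine (htc.smul hslope).congr fun n => ?_
  have h := sub_smul_dslope g 0 (c n)
  rw [sub_zero, hg0, sub_zero] at h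
  rw [mul_smul, h]

theorem hasDerivAt_exp_sub_one_div_two_mul_exp_sub_one :
    HasDerivAt (fun x => (exp x - 1) / (2 * exp x - 1)) 1 0 := by
  have h := ((hasDerivAt_exp 0).sub_const 1).fun_div
    (((hasDerivAt_exp 0).const_mul 2).sub_const 1) (by norm_num)
  norm_num at h
  exact h

theorem aN_base_pos {x : ℝ} (hx : 2 < x) : 0 < (2 * x - 2) / (x - 2) :=
  div_pos (by linarith) (by linarith)

theorem aN_pos {N : ℕ} (hN : 3 ≤ N) : 0 < aN N :=
  rpow_pos_of_pos (aN_base_pos (by exact_mod_cast hN)) _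

theorem log_aN {N : ℕ} (hN : 3 ≤ N) :
    log (aN N) = log ((2 * (N : ℝ) - 2) / ((N : ℝ) - 2)) / ((N : ℝ) - 1) := by
  rw [aN, log_rpow (aN_base_pos (by exact_mod_cast hN))]
  ring

theorem tendsto_log_aN_base :
    Tendsto (fun N : ℕ => log ((2 * (N : ℝ) - 2) / ((N : ℝ) - 2))) atTop (𝓝 (log 2)) := by
  have hinv : Tendsto (fun N : ℕ => (N : ℝ)⁻¹) atTop (𝓝 0) :=
    tendsto_inv_atTop_zero.comp tendsto_natCast_atTop_atTop
  have hbase : Tendsto (fun N : ℕ => (2 - 2 * (N : ℝ)⁻¹) / (1 - 2 * (N : ℝ)⁻¹)) atTop (𝓝 2) := by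
    have h := ((tendsto_const_nhds (x := (2 : ℝ))).sub (hinv.const_mul 2)).div
      ((tendsto_const_nhds (x := (1 : ℝ))).sub (hinv.const_mul 2)) (by norm_num)
    norm_num at h
    exact h
  refine ((continuousAt_log (by norm_num)).tendsto.comp hbase).congr' ?_
  filter_upwards [eventually_ge_atTop 3] with N hN
  have hN' : (3 : ℝ) ≤ N := by exact_mod_cast hN
  have : (N : ℝ) - 2 ≠ 0 := by linarith
  simp only [Function.comp_apply]
  congr 1
  field_simp

theorem tendsto_natCast_mul_log_aN :
    Tendsto (fun N : ℕ => (N : ℝ) * log (aN N)) atTop (𝓝 (log 2)) := by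
  have hratio : Tendsto (fun N : ℕ => (N : ℝ) / (N + -1)) atTop (𝓝 1) :=
    tendsto_natCast_div_add_atTop (-1)
  have h := hratio.mul tendsto_log_aN_base
  rw [one_mul] at h
  refine h.congr' ?_
  filter_upwards [eventually_ge_atTop 3] with N hN
  rw [log_aN hN]
  ring

/-- `N · ε_N → ln 2` as `N → ∞`. -/
theorem mode_asymptotics : Tendsto (fun N : ℕ => (N : ℝ) * epsN N) atTop (nhds (Real.log 2)) := by
  have h := tendsto_natCast_atTop_atTop.smul_comp_of_hasDerivAt
    hasDerivAt_exp_sub_one_div_two_mul_exp_sub_one (by norm_num) tendsto_natCast_mul_log_aN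
  rw [smul_eq_mul, mul_one] at h
  refine h.congr' ?_
  filter_upwards [eventually_ge_atTop 3] with N hN
  rw [smul_eq_mul, exp_log (aN_pos hN), epsN]
end

section
/- Let f_N(ε) = (N-1)·(1-ε)^N - (N-2)·(1-2ε)^N and ε_N = (a_N-1)/(2a_N-1) with a_N = ((2N-2)/(N-2))^{1/(N-1)}. Then f_N(ε_N)/N converges to 1/4 as N → ∞. -/
/-!
Write `a_N = exp y_N` with `y_N = log ((2N - 2)/(N - 2)) / (N - 1)`, so that `N y_N → log 2`.
Since `exp y - 1 = y + O(y²)`, also `N (a_N - 1) → log 2`, and as `a_N → 1` this gives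
`N ε_N → log 2`. Hence `(1 - ε_N)^N → 1/2` and `(1 - 2ε_N)^N → 1/4`, so that
`f_N(ε_N)/N = (1 - 1/N)(1 - ε_N)^N - (1 - 2/N)(1 - 2ε_N)^N → 1/2 - 1/4`.
-/

open Filter

/-- `f_N(ε) = (N-1)(1-ε)^N - (N-2)(1-2ε)^N`, the expected DBSCAN cluster count. -/
noncomputable def fN (N : ℕ) (ε : ℝ) : ℝ :=
  ((N : ℝ) - 1) * (1 - ε) ^ N - ((N : ℝ) - 2) * (1 - 2 * ε) ^ N

open Real Topology

lemma tendsto_natCast_sub_div_natCast_sub (a b : ℝ) :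
    Tendsto (fun n : ℕ ↦ ((n : ℝ) - a) / (n - b)) atTop (𝓝 1) := by
  simpa using (tendsto_add_mul_div_add_mul_atTop_nhds (-a) (-b) 1 one_ne_zero).congr
    fun n ↦ by ring

lemma tendsto_zero_of_tendsto_nat_mul {g : ℕ → ℝ} {t : ℝ}
    (hg : Tendsto (fun n ↦ n * g n) atTop (𝓝 t)) : Tendsto g atTop (𝓝 0) := by
  refine (zero_mul t ▸ tendsto_one_div_atTop_nhds_zero_nat.mul hg).congr' ?_
  filter_upwards [eventually_ne_atTop 0] with n hn
  field_simp

lemma tendsto_nat_mul_exp_sub_one_of_tendsto {g : ℕ → ℝ} {t : ℝ}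
    (hg : Tendsto (fun n ↦ n * g n) atTop (𝓝 t)) :
    Tendsto (fun n ↦ n * (exp (g n) - 1)) atTop (𝓝 t) := by
  have hg0 := tendsto_zero_of_tendsto_nat_mul hg
  have herr : Tendsto (fun n ↦ n * (exp (g n) - 1) - n * g n) atTop (𝓝 0) := by
    refine squeeze_zero_norm' ?_ (mul_zero t ▸ hg.mul hg0)
    filter_upwards [hg0.eventually (Metric.closedBall_mem_nhds 0 one_pos)] with n hn
    rw [dist_zero_right, Real.norm_eq_abs] at hn
    calc ‖n * (exp (g n) - 1) - n * g n‖ = n * |exp (g n) - 1 - g n| := by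
          rw [← mul_sub, Real.norm_eq_abs, abs_mul, Nat.abs_cast]
      _ ≤ n * g n ^ 2 := by gcongr; exact abs_exp_sub_one_sub_id_le hn
      _ = n * g n * g n := by ring
  simpa using herr.add hg

lemma tendsto_nat_mul_aN_sub_one : Tendsto (fun N : ℕ ↦ N * (aN N - 1)) atTop (𝓝 (log 2)) := by
  set c : ℕ → ℝ := fun N ↦ (2 * (N : ℝ) - 2) / ((N : ℝ) - 2)
  have hc : Tendsto c atTop (𝓝 2) := by
    simpa [c] using ((tendsto_natCast_sub_div_natCast_sub 1 2).const_mul 2).congr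
      fun N ↦ by ring
  have hlog : Tendsto (fun N : ℕ ↦ N * (log (c N) / (N - 1))) atTop (𝓝 (log 2)) := by
    simpa using ((tendsto_natCast_sub_div_natCast_sub 0 1).mul
      ((continuousAt_log two_ne_zero).tendsto.comp hc)).congr fun N ↦ by simp; ring
  refine (tendsto_nat_mul_exp_sub_one_of_tendsto hlog).congr' ?_
  filter_upwards [eventually_ge_atTop 3] with N hN
  have hN : (3 : ℝ) ≤ N := by exact_mod_cast hN
  rw [aN, rpow_def_of_pos (div_pos (by linarith) (by linarith)), mul_one_div]

lemma tendsto_nat_mul_epsN : Tendsto (fun N : ℕ ↦ N * epsN N) atTop (𝓝 (log 2)) := by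
  have hu := tendsto_nat_mul_aN_sub_one
  have hden : Tendsto (fun N ↦ 2 * (aN N - 1) + 1) atTop (𝓝 1) := by
    simpa using ((tendsto_zero_of_tendsto_nat_mul hu).const_mul 2).add_const 1
  simpa using (hu.div hden one_ne_zero).congr fun N ↦ by simp only [Pi.div_apply, epsN]; ring

lemma tendsto_one_sub_mul_epsN_pow (k : ℕ) :
    Tendsto (fun N : ℕ ↦ (1 - k * epsN N) ^ N) atTop (𝓝 (2 ^ k)⁻¹) := by
  have h : Tendsto (fun N : ℕ ↦ N * -(k * epsN N)) atTop (𝓝 (-k * log 2)) :=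
    (tendsto_nat_mul_epsN.const_mul (-k : ℝ)).congr fun N ↦ by ring
  have hexp : exp (-k * log 2) = (2 ^ k)⁻¹ := by
    rw [neg_mul, exp_neg, ← log_pow, exp_log (by positivity)]
  exact hexp ▸ (tendsto_one_add_pow_exp_of_tendsto h).congr fun N ↦ by ring

/-- The maximal expected number of clusters is asymptotically `N/4`:
`f_N(ε_N)/N → 1/4` as `N → ∞`. -/
theorem max_expected_clusters_asymptotics :
    Tendsto (fun N : ℕ => fN N (epsN N) / N) atTop (nhds (1 / 4 : ℝ)) := by
  have key := ((tendsto_natCast_sub_div_natCast_sub 1 0).mul (tendsto_one_sub_mul_epsN_pow 1)).sub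
    ((tendsto_natCast_sub_div_natCast_sub 2 0).mul (tendsto_one_sub_mul_epsN_pow 2))
  rw [show (1 : ℝ) * (2 ^ 1)⁻¹ - 1 * (2 ^ 2)⁻¹ = 1 / 4 by norm_num] at key
  refine key.congr fun N ↦ ?_
  rw [fN]
  push_cast
  ring
end

section
/- Let X consist of N i.i.d. Uniform[0,1] samples, ρ ∈ (0, 1/4), MinPts = ⌈ρN⌉, and β > 1. For any ε < (1/β)·ρ/2 and any δ > 0, there exists N_ε such that for all N > N_ε, with probability at least 1 - δ, X has no core points and DBSCAN returns zero clusters. -/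
open MeasureTheory Set

section DBSCAN

variable {M : Type*} [MetricSpace M]

/-- `p` is a core point of dataset `X`: it belongs to `X` and its closed `ε`-ball contains at
least `minPts` points of `X` (including itself). -/
def IsCore (X : Finset M) (ε : ℝ) (minPts : ℕ) (p : M) : Prop :=
  p ∈ X ∧ minPts ≤ {y : M | y ∈ X ∧ dist p y ≤ ε}.ncard

/-- `q` is density-reachable from `p`: there is a chain in `X` from `p` to `q` whose points
(except possibly the last) are core points, with consecutive distances at most `ε`. -/
def Reach (X : Finset M) (ε : ℝ) (minPts : ℕ) (p q : M) : Prop :=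
  ∃ (t : ℕ) (c : Fin (t + 1) → M), c 0 = p ∧ c (Fin.last t) = q ∧ (∀ i, c i ∈ X) ∧
    ∀ i : Fin t, IsCore X ε minPts (c i.castSucc) ∧ dist (c i.castSucc) (c i.succ) ≤ ε

/-- A DBSCAN cluster: the set of all points density-reachable from some core point. -/
def IsCluster (X : Finset M) (ε : ℝ) (minPts : ℕ) (c : Set M) : Prop :=
  ∃ p, IsCore X ε minPts p ∧ c = {q : M | Reach X ε minPts p q}

/-- The number of clusters DBSCAN produces on `X` with parameters `ε`, `minPts`. -/
noncomputable def numClusters (X : Finset M) (ε : ℝ) (minPts : ℕ) : ℕ :=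
  Set.ncard {c : Set M | IsCluster X ε minPts c}

end DBSCAN

/-!
Core points are samples, so they lie in `[0, 1]` almost surely. With `g = (ρ - 2ε)/2`, the
`ε`-neighbourhood of any `p ∈ [0, 1]` lies in one of the `⌈1/g⌉₊ + 1` windows
`[kg - ε, kg + g + ε]`, each of length `g + 2ε = ρ - g`. The number of samples in a fixed window is binomial with mean
at most `(ρ - g)N` and variance at most `N/4`, so by Chebyshev it reaches `ρN` with probability
at most `1/(4g²N)`. A union bound over the windows makes a core point unlikely for large `N`,
and without core points there are no clusters.
-/

open MeasureTheory ProbabilityTheory Set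
open scoped ENNReal Finset

instance : IsProbabilityMeasure (volume.restrict (Icc (0 : ℝ) 1)) :=
  ⟨by simp [Real.volume_Icc]⟩

instance inst_s10 (N : ℕ) : IsProbabilityMeasure (unifN N) := by
  unfold unifN; infer_instance

section DBSCAN

variable {M : Type*} [MetricSpace M] {ε : ℝ} {minPts : ℕ}

theorem numClusters_eq_zero_of_forall_not_isCore {X : Finset M}
    (h : ∀ p, ¬ IsCore X ε minPts p) : numClusters X ε minPts = 0 := by
  have hempty : {c : Set M | IsCluster X ε minPts c} = ∅ :=
    Set.eq_empty_of_forall_notMem fun _ ⟨p, hp, _⟩ => h p hp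
  rw [numClusters, hempty, Set.ncard_empty]

theorem IsCore.le_card_filter_dist_le {ι : Type*} [Fintype ι] [DecidableEq M] {x : ι → M}
    {p : M} [DecidablePred fun j => dist p (x j) ≤ ε]
    (hp : IsCore (Finset.image x Finset.univ) ε minPts p) : minPts ≤ #{j | dist p (x j) ≤ ε} := by
  have hnbhd : {y : M | y ∈ Finset.image x Finset.univ ∧ dist p y ≤ ε}
      = ↑(Finset.image x {j | dist p (x j) ≤ ε}) := by
    ext y
    simp only [Set.mem_ofPred_eq, Finset.coe_image, Finset.coe_filter, Finset.mem_image,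
      Finset.mem_univ, true_and, Set.mem_image]
    constructor
    · rintro ⟨⟨j, rfl⟩, hj⟩
      exact ⟨j, hj, rfl⟩
    · rintro ⟨j, hj, rfl⟩
      exact ⟨⟨j, rfl⟩, hj⟩
  calc minPts ≤ _ := hp.2
    _ = #(Finset.image x {j | dist p (x j) ≤ ε}) := by rw [hnbhd, Set.ncard_coe_finset]
    _ ≤ _ := Finset.card_image_le

end DBSCAN

theorem measure_pi_add_le_card_filter_mem_le {α ι : Type*} [MeasurableSpace α] [Fintype ι]
    (ν : Measure α) [IsProbabilityMeasure ν] {I : Set α} [DecidablePred (· ∈ I)]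
    (hI : MeasurableSet I) {t : ℝ} (ht : 0 < t) :
    Measure.pi (fun _ : ι => ν) {x | ν.real I * Fintype.card ι + t ≤ #{j | x j ∈ I}}
      ≤ ENNReal.ofReal (Fintype.card ι / (4 * t ^ 2)) := by
  set μ := Measure.pi fun _ : ι => ν
  set S : (ι → α) → ℝ := ∑ j, fun x => I.indicator 1 (x j)
  have hS : ∀ x, S x = #{j | x j ∈ I} := by
    intro x
    simp [S, Finset.sum_apply, Set.indicator_apply, Finset.sum_boole]
  have hmem : MemLp (I.indicator (1 : α → ℝ)) 2 ν :=
    memLp_indicator_const 2 hI 1 (Or.inr (measure_ne_top _ _))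
  have hmem_eval : ∀ j, MemLp (fun x : ι → α => I.indicator (1 : α → ℝ) (x j)) 2 μ :=
    fun j => hmem.comp_measurePreserving (measurePreserving_eval _ j)
  have hmean : μ[S] = ν.real I * Fintype.card ι := by
    simp only [S, Finset.sum_apply]
    rw [integral_finsetSum _ fun j _ => (hmem_eval j).integrable one_le_two]
    have hint : ∀ j, ∫ x, I.indicator (1 : α → ℝ) (x j) ∂μ = ν.real I := fun j =>
      (integral_comp_eval (μ := fun _ : ι => ν) (i := j) hmem.aestronglyMeasurable).trans
        (integral_indicator_one hI)
    simp [hint, mul_comm]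
  have hvar : Var[S; μ] ≤ Fintype.card ι / 4 := by
    rw [variance_sum_pi fun _ => hmem]
    have hbounded : ∀ᵐ a ∂ν, I.indicator (1 : α → ℝ) a ∈ Icc 0 1 :=
      ae_of_all _ fun a => by by_cases ha : a ∈ I <;> simp [ha]
    calc ∑ _j : ι, Var[I.indicator 1; ν] ≤ ∑ _j : ι, ((1 - 0) / 2 : ℝ) ^ 2 :=
          Finset.sum_le_sum fun _ _ =>
            variance_le_sq_of_bounded hbounded hmem.aestronglyMeasurable.aemeasurable
      _ = Fintype.card ι / 4 := by
          rw [Finset.sum_const, Finset.card_univ, nsmul_eq_mul]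
          ring
  have hSmem : MemLp S 2 μ := memLp_finsetSum' _ fun j _ => hmem_eval j
  calc μ _ ≤ μ {x | t ≤ |S x - μ[S]|} := by
        refine measure_mono fun x hx => ?_
        replace hx : ν.real I * Fintype.card ι + t ≤ S x := (hS x).symm ▸ hx
        rw [← hmean] at hx
        show t ≤ |S x - μ[S]|
        exact le_abs.2 (Or.inl (by linarith))
    _ ≤ ENNReal.ofReal (Var[S; μ] / t ^ 2) := meas_ge_le_variance_div_sq hSmem ht
    _ ≤ ENNReal.ofReal (Fintype.card ι / (4 * t ^ 2)) := by
        refine ENNReal.ofReal_le_ofReal ?_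
        rw [← div_div]
        gcongr

theorem unifN_ae_forall_mem_Icc (N : ℕ) : ∀ᵐ x ∂unifN N, ∀ j, x j ∈ Icc (0 : ℝ) 1 :=
  Filter.eventually_all.2 fun _ =>
    Measure.tendsto_eval_ae_ae.eventually (ae_restrict_mem measurableSet_Icc)

theorem exists_le_ceil_inv_mul_le_le_mul_add {g p : ℝ} (hg : 0 < g) (hp : p ∈ Icc (0 : ℝ) 1) :
    ∃ k ≤ ⌈1 / g⌉₊, (k : ℝ) * g ≤ p ∧ p ≤ k * g + g := by
  refine ⟨⌊p / g⌋₊, ?_, ?_, ?_⟩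
  · exact (Nat.floor_le_floor (div_le_div_of_nonneg_right hp.2 hg.le)).trans
      (Nat.floor_le_ceil _)
  · rw [← le_div_iff₀ hg]
    exact Nat.floor_le (div_nonneg hp.1 hg.le)
  · have := Nat.lt_floor_add_one (p / g)
    rw [div_lt_iff₀ hg] at this
    linarith

theorem unifN_exists_isCore_le {ρ ε : ℝ} (hε : 0 ≤ ε) (hερ : 2 * ε < ρ) {N : ℕ} (hN : 0 < N) :
    unifN N {x | ∃ p, IsCore (Finset.image x Finset.univ) ε ⌈ρ * N⌉₊ p}
      ≤ ENNReal.ofReal ((⌈2 / (ρ - 2 * ε)⌉₊ + 1) / (ρ - 2 * ε) ^ 2 / N) := by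
  classical
  set g := (ρ - 2 * ε) / 2
  have hg : 0 < g := half_pos (sub_pos.2 hερ)
  set ν := volume.restrict (Icc (0 : ℝ) 1)
  set window : ℕ → Set ℝ := fun k => Icc (k * g - ε) (k * g + g + ε)
  set dense : ℕ → Set (Fin N → ℝ) :=
    fun k => {x | ν.real (window k) * N + g * N ≤ #{j | x j ∈ window k}}
  have hwindow : ∀ k, ν.real (window k) ≤ g + 2 * ε := fun k => by
    rw [measureReal_restrict_apply measurableSet_Icc]
    refine (measureReal_mono inter_subset_left isCompact_Icc.measure_lt_top.ne).trans_eq ?_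
    rw [Real.volume_real_Icc_of_le (by linarith)]
    ring
  have hdense : ∀ k, unifN N (dense k) ≤ ENNReal.ofReal (N / (4 * (g * N) ^ 2)) := fun k => by
    have h := measure_pi_add_le_card_filter_mem_le (ι := Fin N) ν (I := window k)
      measurableSet_Icc (by positivity : 0 < g * N)
    rwa [Fintype.card_fin] at h
  have hcover : {x | ∃ p, IsCore (Finset.image x Finset.univ) ε ⌈ρ * N⌉₊ p}
      ≤ᵐ[unifN N] ⋃ k ∈ Finset.range (⌈1 / g⌉₊ + 1), dense k := by
    filter_upwards [unifN_ae_forall_mem_Icc N] with x hx ⟨p, hp⟩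
    obtain ⟨i, -, rfl⟩ := Finset.mem_image.1 hp.1
    obtain ⟨k, hk, hkp, hpk⟩ := exists_le_ceil_inv_mul_le_le_mul_add hg (hx i)
    refine mem_biUnion (Finset.mem_range.2 (Nat.lt_succ_of_le hk)) ?_
    have hball : #{j | dist (x i) (x j) ≤ ε} ≤ #{j | x j ∈ window k} :=
      Finset.card_le_card <| Finset.monotone_filter_right _ fun j _ hj => by
        rw [Real.dist_eq, abs_le] at hj
        constructor <;> linarith
    have hcount : (⌈ρ * N⌉₊ : ℝ) ≤ #{j | x j ∈ window k} := by
      exact_mod_cast hp.le_card_filter_dist_le.trans hball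
    calc ν.real (window k) * N + g * N ≤ (g + 2 * ε) * N + g * N := by gcongr; exact hwindow k
      _ = ρ * N := by ring
      _ ≤ ⌈ρ * N⌉₊ := Nat.le_ceil _
      _ ≤ #{j | x j ∈ window k} := hcount
  calc unifN N _ ≤ unifN N (⋃ k ∈ Finset.range (⌈1 / g⌉₊ + 1), dense k) := measure_mono_ae hcover
    _ ≤ ∑ k ∈ Finset.range (⌈1 / g⌉₊ + 1), unifN N (dense k) := measure_biUnion_finset_le _ _
    _ ≤ ∑ _k ∈ Finset.range (⌈1 / g⌉₊ + 1), ENNReal.ofReal (N / (4 * (g * N) ^ 2)) :=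
        Finset.sum_le_sum fun k _ => hdense k
    _ = ENNReal.ofReal ((⌈1 / g⌉₊ + 1) * (N / (4 * (g * N) ^ 2))) := by
        rw [Finset.sum_const, Finset.card_range, nsmul_eq_mul,
          ENNReal.ofReal_mul (by positivity)]
        norm_cast
    _ = ENNReal.ofReal ((⌈2 / (ρ - 2 * ε)⌉₊ + 1) / (ρ - 2 * ε) ^ 2 / N) := by
        have hN' : (N : ℝ) ≠ 0 := by positivity
        have hρε : ρ - 2 * ε ≠ 0 := by linarith
        rw [one_div_div]
        congr 1
        field_simp
        ring

/-- Zero-cluster concentration (1D): for `ρ ∈ (0,1/4)`, `MinPts = ⌈ρN⌉`, `β > 1` and any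
`ε < (1/β)·ρ/2` and `δ > 0`, for all large enough `N`, with probability at least `1-δ` the
dataset has no core points and DBSCAN returns zero clusters. -/
theorem dbscan_zero_clusters_whp (ρ : ℝ) (hρ : ρ ∈ Set.Ioo (0 : ℝ) (1/4))
    (β : ℝ) (hβ : 1 < β) (ε : ℝ) (hε0 : 0 < ε) (hε : ε < (1/β) * ρ / 2) (δ : ℝ) (hδ : 0 < δ) :
    ∃ N₀ : ℕ, ∀ N : ℕ, N₀ < N →
      ENNReal.ofReal (1 - δ) ≤
        unifN N {x : Fin N → ℝ |
          (∀ p, ¬ IsCore (Finset.image x Finset.univ) ε ⌈ρ * N⌉₊ p) ∧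
          numClusters (Finset.image x Finset.univ) ε ⌈ρ * N⌉₊ = 0} := by
  have hερ : 2 * ε < ρ := by
    have : 1 / β * ρ < ρ := mul_lt_of_lt_one_left hρ.1 ((div_lt_one (by linarith)).2 hβ)
    linarith
  obtain ⟨N₀, hN₀⟩ := Filter.eventually_atTop.1 <|
    (tendsto_const_div_atTop_nhds_zero_nat
      ((⌈2 / (ρ - 2 * ε)⌉₊ + 1) / (ρ - 2 * ε) ^ 2 : ℝ)).eventually (gt_mem_nhds hδ)
  refine ⟨N₀, fun N hN => ?_⟩
  set core := {x : Fin N → ℝ | ∃ p, IsCore (Finset.image x Finset.univ) ε ⌈ρ * N⌉₊ p}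
  have hcore : unifN N core ≤ ENNReal.ofReal δ :=
    (unifN_exists_isCore_le hε0.le hερ (by omega)).trans
      (ENNReal.ofReal_le_ofReal (hN₀ N hN.le).le)
  have hgood : coreᶜ ⊆ {x | (∀ p, ¬ IsCore (Finset.image x Finset.univ) ε ⌈ρ * N⌉₊ p) ∧
      numClusters (Finset.image x Finset.univ) ε ⌈ρ * N⌉₊ = 0} := fun x hx =>
    ⟨not_exists.1 hx, numClusters_eq_zero_of_forall_not_isCore (not_exists.1 hx)⟩
  calc ENNReal.ofReal (1 - δ) = 1 - ENNReal.ofReal δ := by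
        rw [ENNReal.ofReal_sub _ hδ.le, ENNReal.ofReal_one]
    _ ≤ 1 - unifN N core := tsub_le_tsub_left hcore 1
    _ ≤ unifN N coreᶜ := by
        rw [tsub_le_iff_left, ← measure_univ (μ := unifN N)]
        exact measure_univ_le_add_compl core
    _ ≤ _ := measure_mono hgood
end

section
/- For DBSCAN in dimension 1 with MinPts = 2: the number of clusters equals the number of indices i ∈ {2, ..., N} such that u_i - u_{i-1} ≤ ε and (i = N or u_{i+1} - u_i > ε), where u_1 ≤ ... ≤ u_N are the sorted data points (assumed distinct). -/
open MeasureTheory Set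

def SameRun (N : ℕ) (ε : ℝ) (u : Fin N → ℝ) (a b : Fin N) : Prop :=
  ∀ m : ℕ, (h : m + 1 < N) → min a.val b.val ≤ m → m + 1 ≤ max a.val b.val →
    u ⟨m + 1, h⟩ - u ⟨m, by omega⟩ ≤ ε

section Lemmas
variable {N : ℕ} {ε : ℝ} {u : Fin N → ℝ}

theorem sameRun_refl (a : Fin N) : SameRun N ε u a a := by
  intro m h h1 h2; exfalso; omega

theorem sameRun_symm {a b : Fin N} (h : SameRun N ε u a b) : SameRun N ε u b a := by
  intro m hm h1 h2; exact h m hm (by omega) (by omega)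

theorem sameRun_trans {a b c : Fin N} (hab : SameRun N ε u a b) (hbc : SameRun N ε u b c) :
    SameRun N ε u a c := by
  intro m hm h1 h2
  by_cases hc : min a.val b.val ≤ m ∧ m + 1 ≤ max a.val b.val
  · exact hab m hm hc.1 hc.2
  · exact hbc m hm (by omega) (by omega)

variable (hε : 0 < ε) (hu : StrictMono u)

include hu in
theorem dist_u (p q : Fin N) (h : p ≤ q) : dist (u p) (u q) = u q - u p := by
  rw [Real.dist_eq, abs_sub_comm, abs_of_nonneg (sub_nonneg.2 (hu.monotone h))]

include hε hu in
theorem core_of_near (j k : Fin N) (hjk : j ≠ k) (hd : dist (u j) (u k) ≤ ε) :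
    IsCore (Finset.image u Finset.univ) ε 2 (u j) := by
  refine ⟨Finset.mem_image_of_mem u (Finset.mem_univ j), ?_⟩
  have hsub : ({u j, u k} : Set ℝ) ⊆ {y : ℝ | y ∈ Finset.image u Finset.univ ∧ dist (u j) y ≤ ε} := by
    rintro y (rfl | rfl)
    · exact ⟨Finset.mem_image_of_mem u (Finset.mem_univ j), by simp [hε.le]⟩
    · exact ⟨Finset.mem_image_of_mem u (Finset.mem_univ k), hd⟩
  have hfin : {y : ℝ | y ∈ Finset.image u Finset.univ ∧ dist (u j) y ≤ ε}.Finite :=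
    (Finset.image u Finset.univ).finite_toSet.subset (fun y hy => hy.1)
  calc 2 = ({u j, u k} : Set ℝ).ncard := (Set.ncard_pair (fun h => hjk (hu.injective h))).symm
    _ ≤ _ := Set.ncard_le_ncard hsub hfin

include hu in
theorem core_gap {j : Fin N} (hj : IsCore (Finset.image u Finset.univ) ε 2 (u j)) :
    (∃ h : 1 ≤ j.val, u j - u ⟨j.val - 1, by omega⟩ ≤ ε) ∨
    (∃ h : j.val + 1 < N, u ⟨j.val + 1, h⟩ - u j ≤ ε) := by
  obtain ⟨-, hcard⟩ := hj
  have hfin : {y : ℝ | y ∈ Finset.image u Finset.univ ∧ dist (u j) y ≤ ε}.Finite :=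
    (Finset.image u Finset.univ).finite_toSet.subset (fun y hy => hy.1)
  obtain ⟨y, ⟨hyX, hyd⟩, hyne⟩ := Set.exists_ne_of_one_lt_ncard (lt_of_lt_of_le one_lt_two hcard) (u j)
  obtain ⟨m, -, rfl⟩ := Finset.mem_image.1 hyX
  have hmj : m ≠ j := fun h => hyne (by rw [h])
  rcases lt_or_gt_of_ne hmj with hlt | hgt
  · left
    have h1 : 1 ≤ j.val := by have := hlt; omega
    refine ⟨h1, ?_⟩
    have hle : u m ≤ u ⟨j.val - 1, by omega⟩ := hu.monotone (by simp [Fin.le_def]; omega)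
    have : dist (u j) (u m) = u j - u m := by
      rw [Real.dist_eq, abs_of_nonneg (sub_nonneg.2 (hu.monotone hlt.le))]
    linarith [hyd, this ▸ hyd]
  · right
    have h1 : j.val + 1 < N := by have := m.isLt; have := hgt; omega
    refine ⟨h1, ?_⟩
    have hle : u ⟨j.val + 1, h1⟩ ≤ u m := hu.monotone (by simp [Fin.le_def]; omega)
    have : dist (u j) (u m) = u m - u j := dist_u hu j m hgt.le
    linarith
end Lemmas

section Lemmas2
variable {N : ℕ} {ε : ℝ} {u : Fin N → ℝ} (hε : 0 < ε) (hu : StrictMono u)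

include hu in
theorem reach_sameRun {a b : Fin N}
    (h : Reach (Finset.image u Finset.univ) ε 2 (u a) (u b)) : SameRun N ε u a b := by
  obtain ⟨t, c, hc0, hclast, hmem, hstep⟩ := h
  intro m hm h1 h2
  by_contra hlt
  push_neg at hlt
  by_cases ha : a.val ≤ m
  · have hb : m + 1 ≤ b.val := by omega
    have key : ∀ i : Fin (t + 1), c i ≤ u ⟨m, by omega⟩ := by
      intro i
      induction i using Fin.induction with
      | zero => rw [hc0]; exact hu.monotone (by simp only [Fin.le_def]; omega)
      | succ i ih =>
        have hd := (hstep i).2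
        rw [Real.dist_eq] at hd
        have h3 := abs_le.1 hd
        obtain ⟨k, -, hk⟩ := Finset.mem_image.1 (hmem i.succ)
        have hk1 : u k < u ⟨m + 1, hm⟩ := by rw [hk]; linarith
        have hk2 : k.val < m + 1 := by simpa [Fin.lt_def] using hu.lt_iff_lt.1 hk1
        rw [← hk]
        exact hu.monotone (by simp [Fin.le_def]; omega)
    have := key (Fin.last t)
    rw [hclast] at this
    have : b.val ≤ m := by simpa [Fin.le_def] using hu.le_iff_le.1 this
    omega
  · have ha' : m + 1 ≤ a.val := by omega
    have hb : b.val ≤ m := by omega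
    have key : ∀ i : Fin (t + 1), u ⟨m + 1, hm⟩ ≤ c i := by
      intro i
      induction i using Fin.induction with
      | zero => rw [hc0]; exact hu.monotone (by simp [Fin.le_def]; omega)
      | succ i ih =>
        have hd := (hstep i).2
        rw [Real.dist_eq] at hd
        have h3 := abs_le.1 hd
        obtain ⟨k, -, hk⟩ := Finset.mem_image.1 (hmem i.succ)
        have hk1 : u ⟨m, by omega⟩ < u k := by rw [hk]; linarith
        have hk2 : m < k.val := by simpa [Fin.lt_def] using hu.lt_iff_lt.1 hk1
        rw [← hk]
        exact hu.monotone (by simp [Fin.le_def]; omega)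
    have := key (Fin.last t)
    rw [hclast] at this
    have : m + 1 ≤ b.val := by simpa [Fin.le_def] using hu.le_iff_le.1 this
    omega

include hε hu in
theorem sameRun_reach {a b : Fin N} (hcore : IsCore (Finset.image u Finset.univ) ε 2 (u a))
    (h : SameRun N ε u a b) : Reach (Finset.image u Finset.univ) ε 2 (u a) (u b) := by
  rcases lt_trichotomy a.val b.val with hab | hab | hab
  · refine ⟨b.val - a.val,
      fun i => u ⟨a.val + i.val, by have := i.isLt; have := b.isLt; omega⟩, ?_, ?_, ?_, ?_⟩
    · exact congrArg u (Fin.ext (by simp))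
    · exact congrArg u (Fin.ext (by simp; omega))
    · intro i; exact Finset.mem_image_of_mem u (Finset.mem_univ _)
    · intro i
      have hi : i.val < b.val - a.val := i.isLt
      have hlt : a.val + i.val + 1 < N := by have := b.isLt; omega
      have hgap : u ⟨a.val + i.val + 1, hlt⟩ - u ⟨a.val + i.val, by omega⟩ ≤ ε :=
        h (a.val + i.val) hlt (by omega) (by omega)
      have hdist : dist (u ⟨a.val + i.val, by omega⟩) (u ⟨a.val + i.val + 1, hlt⟩) ≤ ε := by
        rw [dist_u hu _ _ (by simp [Fin.le_def])]; exact hgap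
      exact ⟨core_of_near hε hu ⟨a.val + i.val, by omega⟩ ⟨a.val + i.val + 1, hlt⟩
          (by simp [Fin.ext_iff]) hdist, hdist⟩
  · refine ⟨0, fun _ => u a, rfl, ?_, fun i => Finset.mem_image_of_mem u (Finset.mem_univ _),
      fun i => i.elim0⟩
    exact congrArg u (Fin.ext hab)
  · refine ⟨a.val - b.val,
      fun i => u ⟨a.val - i.val, by have := a.isLt; omega⟩, ?_, ?_, ?_, ?_⟩
    · exact congrArg u (Fin.ext (by simp))
    · exact congrArg u (Fin.ext (by simp; omega))
    · intro i; exact Finset.mem_image_of_mem u (Finset.mem_univ _)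
    · intro i
      have hi : i.val < a.val - b.val := i.isLt
      have hm : a.val - i.val - 1 + 1 < N := by have := a.isLt; omega
      have hgap := h (a.val - i.val - 1) hm (by omega) (by omega)
      have heq : (⟨a.val - i.val - 1 + 1, hm⟩ : Fin N) = ⟨a.val - i.val, by have := a.isLt; omega⟩ :=
        Fin.ext (show a.val - i.val - 1 + 1 = a.val - i.val by omega)
      rw [heq] at hgap
      have hle : (⟨a.val - (i.val + 1), by have := a.isLt; omega⟩ : Fin N) ≤
          ⟨a.val - i.val, by have := a.isLt; omega⟩ := Fin.mk_le_mk.mpr (by omega)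
      have hdist : dist (u ⟨a.val - i.val, by have := a.isLt; omega⟩)
          (u ⟨a.val - (i.val + 1), by have := a.isLt; omega⟩) ≤ ε := by
        rw [dist_comm, dist_u hu _ _ hle]
        have : a.val - (i.val + 1) = a.val - i.val - 1 := by omega
        simp_rw [this]
        exact hgap
      exact ⟨core_of_near hε hu ⟨a.val - i.val, by have := a.isLt; omega⟩
          ⟨a.val - (i.val + 1), by have := a.isLt; omega⟩ (by simp [Fin.ext_iff]; omega) hdist, hdist⟩

include hε hu in
theorem cluster_eq {j : Fin N} (hcore : IsCore (Finset.image u Finset.univ) ε 2 (u j)) :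
    {q : ℝ | Reach (Finset.image u Finset.univ) ε 2 (u j) q} = u '' {k | SameRun N ε u j k} := by
  ext q
  constructor
  · intro hr
    have hq : q ∈ Finset.image u Finset.univ := by
      obtain ⟨t, c, hc0, hclast, hmem, -⟩ := hr
      rw [← hclast]; exact hmem _
    obtain ⟨b, -, rfl⟩ := Finset.mem_image.1 hq
    exact ⟨b, reach_sameRun hu hr, rfl⟩
  · rintro ⟨b, hb, rfl⟩
    exact sameRun_reach hε hu hcore hb

theorem sameRun_pair {x y : Fin N} (hxy : y.val = x.val + 1) (hg : u y - u x ≤ ε) :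
    SameRun N ε u x y := by
  intro m hm h1 h2
  have hx : m = x.val := by omega
  have he : (⟨m + 1, hm⟩ : Fin N) = y := Fin.ext (show m + 1 = y.val by omega)
  have he2 : (⟨m, by omega⟩ : Fin N) = x := Fin.ext (show m = x.val from hx)
  rw [he, he2]
  exact hg

theorem sameRun_class_eq {i j : Fin N} (hij : SameRun N ε u i j) :
    {k | SameRun N ε u i k} = {k | SameRun N ε u j k} := by
  ext k
  exact ⟨fun h => sameRun_trans (sameRun_symm hij) h, fun h => sameRun_trans hij h⟩
end Lemmas2

/-- In dimension 1 with `MinPts = 2`, the number of DBSCAN clusters equals the number of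
indices `i ∈ {2,…,N}` (0-indexed: `1 ≤ i`) such that `u_i - u_{i-1} ≤ ε` and
(`i = N` or `u_{i+1} - u_i > ε`), where `u_1 < … < u_N` are the sorted (distinct) data. -/
theorem dbscan_cluster_count_1d (N : ℕ) (ε : ℝ) (hε : 0 < ε)
    (u : Fin N → ℝ) (hu : StrictMono u) :
    numClusters (Finset.image u Finset.univ) ε 2 =
      {i : Fin N | 1 ≤ i.val ∧
        u i - u ⟨i.val - 1, Nat.lt_of_le_of_lt (Nat.sub_le _ _) i.isLt⟩ ≤ ε ∧
        (i.val = N - 1 ∨ ∃ h : i.val + 1 < N, ε < u ⟨i.val + 1, h⟩ - u i)}.ncard := by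
  classical
  set X := Finset.image u Finset.univ with hX
  set T : Set (Fin N) := {i : Fin N | 1 ≤ i.val ∧
        u i - u ⟨i.val - 1, Nat.lt_of_le_of_lt (Nat.sub_le _ _) i.isLt⟩ ≤ ε ∧
        (i.val = N - 1 ∨ ∃ h : i.val + 1 < N, ε < u ⟨i.val + 1, h⟩ - u i)} with hT
  set f : Fin N → Set ℝ := fun i => u '' {k | SameRun N ε u i k} with hf
  have hTcore : ∀ i ∈ T, IsCore X ε 2 (u i) := by
    intro i hiT
    rw [hT] at hiT
    obtain ⟨h1, h2, -⟩ := hiT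
    refine core_of_near hε hu i ⟨i.val - 1, by omega⟩ (by simp [Fin.ext_iff]; omega) ?_
    rw [dist_comm, dist_u hu _ _ (Fin.le_def.mpr (show i.val - 1 ≤ i.val by omega))]
    exact h2
  have hinj : Set.InjOn f T := by
    intro i hiT i' hiT' hfe
    have hmem : u i' ∈ f i := by rw [hfe]; exact ⟨i', sameRun_refl i', rfl⟩
    obtain ⟨k, hk, hke⟩ := hmem
    have hk' : SameRun N ε u i i' := by rwa [hu.injective hke] at hk
    rcases lt_trichotomy i.val i'.val with hlt | heq | hgt
    · exfalso
      rw [hT] at hiT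
      obtain ⟨-, -, hc⟩ := hiT
      rcases hc with hc | ⟨h, hc⟩
      · have := i'.isLt; omega
      · have hle := hk' i.val h (by omega) (by omega)
        have he : (⟨i.val, by omega⟩ : Fin N) = i := Fin.ext rfl
        rw [he] at hle
        linarith
    · exact Fin.ext heq
    · exfalso
      have hk'' := sameRun_symm hk'
      rw [hT] at hiT'
      obtain ⟨-, -, hc⟩ := hiT'
      rcases hc with hc | ⟨h, hc⟩
      · have := i.isLt; omega
      · have hle := hk'' i'.val h (by omega) (by omega)
        have he : (⟨i'.val, by omega⟩ : Fin N) = i' := Fin.ext rfl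
        rw [he] at hle
        linarith
  have hset : {c : Set ℝ | IsCluster X ε 2 c} = f '' T := by
    ext c
    constructor
    · rintro ⟨p, hp, rfl⟩
      obtain ⟨j, -, rfl⟩ := Finset.mem_image.1 hp.1
      set S : Finset (Fin N) := Finset.univ.filter (fun k => SameRun N ε u j k) with hS
      have hjS : j ∈ S := by simp [hS, sameRun_refl]
      have hne : S.Nonempty := ⟨j, hjS⟩
      set i := S.max' hne with hi
      have hji : SameRun N ε u j i := by
        have := S.max'_mem hne
        simpa [hS] using this
      have hmax : ∀ k, SameRun N ε u j k → k ≤ i := fun k hk => S.le_max' k (by simp [hS, hk])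
      have hneigh : ∃ k : Fin N, k ≠ j ∧ SameRun N ε u j k := by
        rcases core_gap hu hp with ⟨h1, hg⟩ | ⟨h1, hg⟩
        · exact ⟨⟨j.val - 1, by omega⟩, by simp [Fin.ext_iff]; omega,
            sameRun_symm (sameRun_pair (show j.val = j.val - 1 + 1 by omega) hg)⟩
        · exact ⟨⟨j.val + 1, h1⟩, by simp [Fin.ext_iff], sameRun_pair rfl hg⟩
      obtain ⟨k, hkj, hk⟩ := hneigh
      have hki : k.val ≤ i.val := Fin.le_def.mp (hmax k hk)
      have hjile : j.val ≤ i.val := Fin.le_def.mp (hmax j (sameRun_refl j))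
      have hlt : ∃ w : Fin N, w.val < i.val ∧ SameRun N ε u j w := by
        rcases eq_or_ne j i with hji' | hji'
        · refine ⟨k, ?_, hk⟩
          have h2 : k.val ≠ i.val := fun h => hkj (by rw [← hji'] at h; exact Fin.ext h)
          omega
        · refine ⟨j, ?_, sameRun_refl j⟩
          have h2 : j.val ≠ i.val := fun h => hji' (Fin.ext h)
          omega
      obtain ⟨w, hwi, hw⟩ := hlt
      have h1le : 1 ≤ i.val := by omega
      have hwi' : SameRun N ε u w i := sameRun_trans (sameRun_symm hw) hji
      have hgapi : u i - u ⟨i.val - 1, by omega⟩ ≤ ε := by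
        have hle := hwi' (i.val - 1) (by have := i.isLt; omega) (by omega) (by omega)
        have he : (⟨i.val - 1 + 1, by have := i.isLt; omega⟩ : Fin N) = i :=
          Fin.ext (show i.val - 1 + 1 = i.val by omega)
        rwa [he] at hle
      have hright : i.val = N - 1 ∨ ∃ h : i.val + 1 < N, ε < u ⟨i.val + 1, h⟩ - u i := by
        by_contra hcon
        push_neg at hcon
        obtain ⟨hne1, hle1⟩ := hcon
        have hN : i.val + 1 < N := by have := i.isLt; omega
        have hg := hle1 hN
        have hsr : SameRun N ε u j ⟨i.val + 1, hN⟩ :=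
          sameRun_trans hji (sameRun_pair rfl hg)
        have h2 : i.val + 1 ≤ i.val := Fin.le_def.mp (hmax _ hsr)
        omega
      have hiT : i ∈ T := by rw [hT]; exact ⟨h1le, hgapi, hright⟩
      refine ⟨i, hiT, ?_⟩
      rw [hf]
      simp only
      rw [← sameRun_class_eq hji, ← cluster_eq hε hu hp]
    · rintro ⟨i, hiT, rfl⟩
      exact ⟨u i, hTcore i hiT, (cluster_eq hε hu (hTcore i hiT)).symm⟩
  show Set.ncard {c : Set ℝ | IsCluster X ε 2 c} = T.ncard
  rw [hset, Set.ncard_image_of_injOn hinj]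
end
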